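/- arXiv:1612.01444 — 2 statements merged into one kernel-verified Lean document; each statement's English description precedes it below -/
import Mathlib

section
/- Let p > 2 be prime and let a(t), b(t) be monic polynomials over Z_p with f = deg b(t) < deg a(t) = e. Then there is an injective group homomorphism from B(I_f, C(b(t))) into B(I_e, C(a(t))). -/
/-! Pad `x` with zeros, and pad `y` with zeros except for the entry `∑ j, b_j y_j` in coordinate
`f`; let `U` and `V` be the matrices of these two maps. Since `f < e`, rows `0, …, f-1` of `C(a)`
miss its last row and just shift coordinates up by one, and on `V y` this shift is `C(b) y`, whose
last entry is `∑ j, b_j y_j`. Thus `Uᵀ V = 1` and `Uᵀ C(a) V = C(b)`, so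
`(x, y, z) ↦ (U x, V y, z)` is a homomorphism, injective because `Uᵀ V = 1`. -/

open Matrix in
/-- The Brahana-Baer group `B(L 0, …, L (t-1))` determined by a family of `r × s`
matrices over `ZMod p`: underlying set `(ZMod p)^r × (ZMod p)^s × (ZMod p)^t` with
multiplication `(a,b,c)·(a',b',c') = (a+a', b+b', c+c'+(a L₁ b'ᵀ, …, a L_t b'ᵀ))`. -/
def BGroup (p r s t : ℕ) (L : Fin t → Matrix (Fin r) (Fin s) (ZMod p)) : Type :=
  (Fin r → ZMod p) × (Fin s → ZMod p) × (Fin t → ZMod p)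

namespace BGroup

open Matrix

variable {p r s t : ℕ} {L : Fin t → Matrix (Fin r) (Fin s) (ZMod p)}

instance : Mul (BGroup p r s t L) :=
  ⟨fun x y => (x.1 + y.1, x.2.1 + y.2.1,
    fun i => x.2.2 i + y.2.2 i + x.1 ⬝ᵥ (L i).mulVec y.2.1)⟩

instance : One (BGroup p r s t L) := ⟨(0, 0, 0)⟩

instance : Inv (BGroup p r s t L) :=
  ⟨fun x => (-x.1, -x.2.1, fun i => -x.2.2 i + x.1 ⬝ᵥ (L i).mulVec x.2.1)⟩

lemma mul_def (x y : BGroup p r s t L) :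
    x * y = (x.1 + y.1, x.2.1 + y.2.1,
      fun i => x.2.2 i + y.2.2 i + x.1 ⬝ᵥ (L i).mulVec y.2.1) := rfl

lemma one_def : (1 : BGroup p r s t L) = (0, 0, 0) := rfl

lemma inv_def (x : BGroup p r s t L) :
    x⁻¹ = (-x.1, -x.2.1, fun i => -x.2.2 i + x.1 ⬝ᵥ (L i).mulVec x.2.1) := rfl

instance : Group (BGroup p r s t L) where
  mul := (· * ·)
  one := 1
  inv := (·⁻¹)
  mul_assoc x y z := by
    show (x * y) * z = x * (y * z)
    simp only [HMul.hMul, Mul.mul, mul_def]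
    refine Prod.ext ?_ (Prod.ext ?_ ?_) <;> dsimp
    · abel
    · abel
    · funext i
      simp [Matrix.mulVec_add, dotProduct_add, add_dotProduct]
      ring
  one_mul x := by
    show 1 * x = x
    simp only [HMul.hMul, Mul.mul, mul_def, one_def]
    refine Prod.ext ?_ (Prod.ext ?_ ?_) <;> dsimp
    · abel
    · abel
    · funext i
      simp [zero_dotProduct]
  mul_one x := by
    show x * 1 = x
    simp only [HMul.hMul, Mul.mul, mul_def, one_def]
    refine Prod.ext ?_ (Prod.ext ?_ ?_) <;> dsimp
    · abel
    · abel
    · funext i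
      simp [Matrix.mulVec_zero]
  inv_mul_cancel x := by
    show x⁻¹ * x = 1
    simp only [HMul.hMul, Mul.mul, mul_def, one_def, inv_def]
    refine Prod.ext ?_ (Prod.ext ?_ ?_) <;> dsimp
    · abel
    · abel
    · funext i
      simp [neg_dotProduct]

instance [NeZero p] : Finite (BGroup p r s t L) :=
  inferInstanceAs (Finite (_ × _ × _))

end BGroup

/-- The companion-type matrix of a (monic) polynomial `a` of degree `e`:
entries `1` in positions `(i, i+1)` for the first `e-1` rows, bottom row
`(a_0, …, a_{e-1})`, and `0` elsewhere. -/
def companionMx (p e : ℕ) (a : Polynomial (ZMod p)) : Matrix (Fin e) (Fin e) (ZMod p) :=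
  Matrix.of fun i j =>
    if (i : ℕ) + 1 = e then a.coeff (j : ℕ)
    else if (i : ℕ) + 1 = (j : ℕ) then 1 else 0

namespace Matrix

variable {m n R : Type*} [Fintype m] [Fintype n] [DecidableEq n]

theorem mulVec_injective_of_mul_eq_one [Semiring R] {A : Matrix m n R} {B : Matrix n m R}
    (h : B * A = 1) : Function.Injective A.mulVec :=
  Function.LeftInverse.injective (g := B.mulVec) fun v => by rw [mulVec_mulVec, h, one_mulVec]

theorem mulVec_injective_of_transpose_mul_eq_one [CommSemiring R] {A B : Matrix m n R}
    (h : Aᵀ * B = 1) : Function.Injective A.mulVec :=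
  mulVec_injective_of_mul_eq_one (B := Bᵀ) <| by
    rw [← transpose_transpose A, ← transpose_mul, h, transpose_one]

end Matrix

namespace BGroup

open Matrix

variable {p r s t r' s' : ℕ} {L : Fin t → Matrix (Fin r) (Fin s) (ZMod p)}
  {L' : Fin t → Matrix (Fin r') (Fin s') (ZMod p)}

def map (U : Matrix (Fin r') (Fin r) (ZMod p)) (V : Matrix (Fin s') (Fin s) (ZMod p))
    (hUV : ∀ i, Uᵀ * L' i * V = L i) : BGroup p r s t L →* BGroup p r' s' t L' :=
  MonoidHom.mk' (fun g => (U *ᵥ g.1, V *ᵥ g.2.1, g.2.2)) fun g h => by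
    have hform : ∀ i, U *ᵥ g.1 ⬝ᵥ L' i *ᵥ V *ᵥ h.2.1 = g.1 ⬝ᵥ L i *ᵥ h.2.1 := fun i => by
      rw [← hUV, ← mulVec_mulVec, ← mulVec_mulVec, dotProduct_mulVec g.1, vecMul_transpose]
    refine Prod.ext (mulVec_add U _ _) (Prod.ext (mulVec_add V _ _) (funext fun i => ?_))
    exact congrArg (g.2.2 i + h.2.2 i + ·) (hform i).symm

theorem map_injective {U : Matrix (Fin r') (Fin r) (ZMod p)}
    {V : Matrix (Fin s') (Fin s) (ZMod p)} (hUV : ∀ i, Uᵀ * L' i * V = L i)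
    (hU : Function.Injective U.mulVec) (hV : Function.Injective V.mulVec) :
    Function.Injective (map U V hUV) := fun _ _ h =>
  Prod.ext (hU (congrArg Prod.fst h))
    (Prod.ext (hV (congrArg (·.2.1) h)) (congrArg (·.2.2) h))

end BGroup

section Padding

open Matrix

variable {R : Type*} [Semiring R] {f e : ℕ}

variable (R) in
def paddingMatrix (hfe : f ≤ e) : Matrix (Fin e) (Fin f) R :=
  of fun k i => if k = Fin.castLE hfe i then 1 else 0

def twistedPaddingMatrix (hfe : f ≤ e) (b : Polynomial R) : Matrix (Fin e) (Fin f) R :=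
  paddingMatrix R hfe + of fun (k : Fin e) (j : Fin f) => if (k : ℕ) = f then b.coeff j else 0

theorem transpose_paddingMatrix_mul {n : Type*} (hfe : f ≤ e) (M : Matrix (Fin e) n R) :
    (paddingMatrix R hfe)ᵀ * M = M.submatrix (Fin.castLE hfe) id := by
  ext i j
  simp [paddingMatrix, mul_apply]

theorem transpose_paddingMatrix_mul_twistedPaddingMatrix (hfe : f ≤ e) (b : Polynomial R) :
    (paddingMatrix R hfe)ᵀ * twistedPaddingMatrix hfe b = 1 := by
  rw [transpose_paddingMatrix_mul]
  ext i j
  simp [twistedPaddingMatrix, paddingMatrix, one_apply, i.isLt.ne]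

end Padding

section Companion

open Matrix

variable {p f e : ℕ}

theorem companionMx_mul_apply_of_succ_lt {n : Type*} [Fintype n] (a : Polynomial (ZMod p))
    (M : Matrix (Fin e) n (ZMod p)) {i : Fin e} (hi : (i : ℕ) + 1 < e) (j : n) :
    (companionMx p e a * M) i j = M ⟨i + 1, hi⟩ j := by
  rw [mul_apply, Finset.sum_eq_single ⟨i + 1, hi⟩]
  · simp [companionMx, hi.ne]
  · intro k _ hk
    have hik : (i : ℕ) + 1 ≠ k := fun h => hk (Fin.ext h.symm)
    simp [companionMx, hi.ne, hik]
  · simp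

theorem transpose_paddingMatrix_mul_companionMx_mul (hfe : f < e) (a b : Polynomial (ZMod p)) :
    (paddingMatrix (ZMod p) hfe.le)ᵀ * companionMx p e a * twistedPaddingMatrix hfe.le b
      = companionMx p f b := by
  rw [Matrix.mul_assoc, transpose_paddingMatrix_mul]
  ext i j
  rw [submatrix_apply, companionMx_mul_apply_of_succ_lt a _ (show (i : ℕ) + 1 < e by omega)]
  by_cases hif : (i : ℕ) + 1 = f
  · simp [twistedPaddingMatrix, paddingMatrix, companionMx, hif, Fin.ext_iff, j.isLt.ne']
  · simp [twistedPaddingMatrix, paddingMatrix, companionMx, hif, Fin.ext_iff]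

theorem transpose_paddingMatrix_mul_companionPair_mul (hfe : f < e) (a b : Polynomial (ZMod p))
    (i : Fin 2) :
    (paddingMatrix (ZMod p) hfe.le)ᵀ * ![1, companionMx p e a] i * twistedPaddingMatrix hfe.le b
      = ![1, companionMx p f b] i := by
  fin_cases i
  · simpa using transpose_paddingMatrix_mul_twistedPaddingMatrix hfe.le b
  · exact transpose_paddingMatrix_mul_companionMx_mul hfe a b

end Companion

theorem bgroup_embedding_of_degree_lt_general
    (p : ℕ) (a b : Polynomial (ZMod p)) (hdeg : b.natDegree < a.natDegree) :
    ∃ φ : BGroup p b.natDegree b.natDegree 2 ![1, companionMx p b.natDegree b] →*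
          BGroup p a.natDegree a.natDegree 2 ![1, companionMx p a.natDegree a],
      Function.Injective φ := by
  have hUV := transpose_paddingMatrix_mul_twistedPaddingMatrix (R := ZMod p) hdeg.le b
  exact ⟨BGroup.map _ _ (transpose_paddingMatrix_mul_companionPair_mul hdeg a b),
    BGroup.map_injective _ (Matrix.mulVec_injective_of_transpose_mul_eq_one hUV)
      (Matrix.mulVec_injective_of_mul_eq_one hUV)⟩

/-- For `p > 2` prime and monic polynomials `a(t), b(t)` over `Z_p`
with `deg b < deg a`, there is an injective group homomorphism from
`B(I_f, C(b(t)))` into `B(I_e, C(a(t)))`, where `f = deg b` and `e = deg a`. -/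
theorem bgroup_embedding_of_degree_lt
    (p : ℕ) [Fact p.Prime] (hp2 : 2 < p) (a b : Polynomial (ZMod p))
    (ha : a.Monic) (hb : b.Monic) (hdeg : b.natDegree < a.natDegree) :
    ∃ φ : BGroup p b.natDegree b.natDegree 2 ![1, companionMx p b.natDegree b] →*
          BGroup p a.natDegree a.natDegree 2 ![1, companionMx p a.natDegree a],
      Function.Injective φ :=
  bgroup_embedding_of_degree_lt_general p a b hdeg
end

section
/- Let p and e be primes with p > 2 and e > 2, let q = p^e, and let H = H(F_q) be the Heisenberg group with commutator subgroup H'. Let N ≤ H' be a subgroup with |H' : N| = p^g for some g ≥ 2. Since H' is central and both H/H' and H'/N are elementary abelian p-groups (hence Z_p-vector spaces), the commutator map of H/N induces a Z_p-bilinear map c : (H/H') × (H/H') → H'/N. Then the adjoint ring Adj(c) is isomorphic as a ring to the matrix ring M_2(F_q). -/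
/-- The Heisenberg group over a field `K`: underlying set `K × K × K` with
multiplication `(α,β,γ)·(α',β',γ') = (α+α', β+β', γ+γ'+α·β')`. -/
def Heisenberg (K : Type) [Field K] : Type := K × K × K

namespace Heisenberg

variable {K : Type} [Field K]

instance : Mul (Heisenberg K) :=
  ⟨fun a b => (a.1 + b.1, a.2.1 + b.2.1, a.2.2 + b.2.2 + a.1 * b.2.1)⟩

instance : One (Heisenberg K) := ⟨((0 : K), (0 : K), (0 : K))⟩

instance : Inv (Heisenberg K) :=
  ⟨fun a => (-a.1, -a.2.1, -a.2.2 + a.1 * a.2.1)⟩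

lemma mul_def (a b : Heisenberg K) :
    a * b = (a.1 + b.1, a.2.1 + b.2.1, a.2.2 + b.2.2 + a.1 * b.2.1) := rfl

lemma one_def : (1 : Heisenberg K) = ((0 : K), (0 : K), (0 : K)) := rfl

lemma inv_def (a : Heisenberg K) : a⁻¹ = (-a.1, -a.2.1, -a.2.2 + a.1 * a.2.1) := rfl

instance : Group (Heisenberg K) where
  mul := (· * ·)
  one := 1
  inv := (·⁻¹)
  mul_assoc a b c := by
    show (a * b) * c = a * (b * c)
    simp only [↓mul_def]
    refine Prod.ext ?_ (Prod.ext ?_ ?_) <;> (try dsimp) <;> ring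
  one_mul a := by
    show 1 * a = a
    simp only [↓mul_def, one_def]
    refine Prod.ext ?_ (Prod.ext ?_ ?_) <;> (try dsimp) <;> ring
  mul_one a := by
    show a * 1 = a
    simp only [↓mul_def, one_def]
    refine Prod.ext ?_ (Prod.ext ?_ ?_) <;> (try dsimp) <;> ring
  inv_mul_cancel a := by
    show a⁻¹ * a = 1
    simp only [↓mul_def, one_def, inv_def]
    refine Prod.ext ?_ (Prod.ext ?_ ?_) <;> (try dsimp) <;> ring

instance [Finite K] : Finite (Heisenberg K) := inferInstanceAs (Finite (K × K × K))

end Heisenberg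

namespace Heisenberg

variable {K : Type} [Field K]

/-- The subgroup `{(0,0,γ)}` of the Heisenberg group. -/
def zSubgroup (K : Type) [Field K] : Subgroup (Heisenberg K) where
  carrier := {x : Heisenberg K | x.1 = 0 ∧ x.2.1 = 0}
  one_mem' := ⟨rfl, rfl⟩
  mul_mem' := by
    rintro x y ⟨hx1, hx2⟩ ⟨hy1, hy2⟩
    refine ⟨?_, ?_⟩ <;> simp [mul_def, hx1, hx2, hy1, hy2]
  inv_mem' := by
    rintro x ⟨h1, h2⟩
    refine ⟨?_, ?_⟩ <;> simp [inv_def, h1, h2]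

lemma commutator_le_zSubgroup : commutator (Heisenberg K) ≤ zSubgroup K := by
  rw [commutator, Subgroup.commutator_le]
  intro g _ h _
  refine ⟨?_, ?_⟩ <;> simp [commutatorElement_def, ↓mul_def, inv_def]

instance : CommGroup ↥(commutator (Heisenberg K)) :=
  { (inferInstance : Group ↥(commutator (Heisenberg K))) with
    mul_comm := by
      rintro ⟨x, hx⟩ ⟨y, hy⟩
      obtain ⟨hx1, hx2⟩ := commutator_le_zSubgroup hx
      obtain ⟨hy1, hy2⟩ := commutator_le_zSubgroup hy
      apply Subtype.ext
      show x * y = y * x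
      simp only [↓mul_def]
      refine Prod.ext ?_ (Prod.ext ?_ ?_) <;>
        · dsimp
          simp [hx1, hx2, hy1, hy2]
          try ring }

open scoped commutatorElement in
lemma comm_mem_commutator (x y : Heisenberg K) :
    x⁻¹ * y⁻¹ * x * y ∈ commutator (Heisenberg K) := by
  have h : x⁻¹ * y⁻¹ * x * y = ⁅x⁻¹, y⁻¹⁆ := by
    simp [commutatorElement_def, mul_assoc]
  rw [h, commutator]
  exact Subgroup.commutator_mem_commutator (Subgroup.mem_top _) (Subgroup.mem_top _)

end Heisenberg

/-- The adjoint ring of a biadditive map `c : U × U → W`: the subring of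
`End(U) × End(U)ᵐᵒᵖ` consisting of pairs `(F, F*)` with `c (F u) v = c u (F* v)`
for all `u, v`; multiplication is `(F,F*)·(G,G*) = (F∘G, G*∘F*)`. -/
def AdjRing {U W : Type} [AddCommGroup U] [AddCommGroup W] (c : U →+ U →+ W) :
    Subring (AddMonoid.End U × (AddMonoid.End U)ᵐᵒᵖ) where
  carrier := {F | ∀ u v : U, c (F.1 u) v = c u (F.2.unop v)}
  zero_mem' := by intro u v; simp
  one_mem' := by intro u v; rfl
  add_mem' := by
    rintro ⟨a1, a2⟩ ⟨b1, b2⟩ ha hb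
    have ha' : ∀ u v : U, c (a1 u) v = c u (a2.unop v) := ha
    have hb' : ∀ u v : U, c (b1 u) v = c u (b2.unop v) := hb
    intro u v
    show c (a1 u + b1 u) v = c u (a2.unop v + b2.unop v)
    calc c (a1 u + b1 u) v = c (a1 u) v + c (b1 u) v := by rw [map_add]; rfl
      _ = c u (a2.unop v) + c u (b2.unop v) := by rw [ha' u v, hb' u v]
      _ = c u (a2.unop v + b2.unop v) := (map_add (c u) _ _).symm
  neg_mem' := by
    rintro ⟨a1, a2⟩ ha
    have ha' : ∀ u v : U, c (a1 u) v = c u (a2.unop v) := ha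
    intro u v
    show c (-(a1 u)) v = c u (-(a2.unop v))
    calc c (-(a1 u)) v = -(c (a1 u) v) := by rw [map_neg]; rfl
      _ = -(c u (a2.unop v)) := by rw [ha' u v]
      _ = c u (-(a2.unop v)) := (map_neg (c u) _).symm
  mul_mem' := by
    rintro ⟨a1, a2⟩ ⟨b1, b2⟩ ha hb
    have ha' : ∀ u v : U, c (a1 u) v = c u (a2.unop v) := ha
    have hb' : ∀ u v : U, c (b1 u) v = c u (b2.unop v) := hb
    intro u v
    show c (a1 (b1 u)) v = c u (b2.unop (a2.unop v))
    rw [ha' (b1 u) v, hb' u (a2.unop v)]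

/-!
In the coordinates `H/H' ≅ K²` and `H'/N ≅ K/N₀`, where `N₀ = {γ | (0,0,γ) ∈ N}`, the commutator
pairing is the symplectic form `x₀y₁ - y₀x₁` reduced mod `N₀`. Every `A ∈ M₂(K)` gives the adjoint
pair `(A, adj A)`, and this is a ring embedding `M₂(K) → Adj(c)`. Conversely, the entries of an
adjoint pair are pairs of additive maps `(φ, ψ)` of `K` with `φ(a)b ≡ aψ(b) mod N₀`, and each such
pair is multiplication by one scalar: for a nondegenerate form `f(xy)` on `K` over `𝔽_p`, the
annihilator of `N₀` has dimension `g ≥ 2`; two independent annihilators `t₁, t₂` force `φ` to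
commute with multiplication by `t₁/t₂ ∉ 𝔽_p`, which generates `K` because `[K : 𝔽_p] = e` is prime.
-/

open Module Matrix

section FieldExtension

variable {F K : Type*} [Field F] [Field K] [Algebra F K]

theorem exists_dual_mul_nondegenerate :
    ∃ f : Dual F K, ((LinearMap.mul F K).compr₂ f : LinearMap.BilinForm F K).Nondegenerate := by
  obtain ⟨f, hf⟩ : ∃ f : Dual F K, f 1 ≠ 0 := by
    simpa using (forall_dual_apply_eq_zero_iff F (1 : K)).not.mpr one_ne_zero
  have hsep : ∀ x : K, (∀ y, f (x * y) = 0) → x = 0 := fun x hx => by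
    by_contra hx0
    exact hf (by simpa [hx0] using hx x⁻¹)
  exact ⟨f, hsep, fun y hy => hsep y fun x => by simpa [mul_comm] using hy x⟩

theorem LinearMap.apply_eq_apply_one_mul_of_finrank_prime (hK : (finrank F K).Prime)
    (φ : K →ₗ[F] K) {s : K} (hs : s ∉ (⊥ : Subalgebra F K)) (hφs : ∀ a, φ (s * a) = s * φ a)
    (a : K) : φ a = φ 1 * a := by
  let S : Subalgebra F K := (Subalgebra.centralizer F {φ}).comap (Algebra.lmul F K)
  have mem_S : ∀ x, x ∈ S ↔ ∀ a, φ (x * a) = x * φ a := fun x => by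
    simp only [S, Subalgebra.mem_comap, Subalgebra.mem_centralizer_iff, Set.mem_singleton_iff,
      forall_eq]
    exact LinearMap.ext_iff
  have hS : S = ⊤ := ((Subalgebra.isSimpleOrder_of_finrank_prime F K hK).eq_bot_or_eq_top S)
    |>.resolve_left fun hS => hs (hS ▸ (mem_S s).mpr hφs)
  simpa [mul_comm] using (mem_S a).mp (hS ▸ Algebra.mem_top) 1

theorem exists_eq_mul_of_mul_sub_mul_mem [FiniteDimensional F K] (hK : (finrank F K).Prime)
    (N : Submodule F K) (hN : 2 ≤ finrank F (K ⧸ N)) (φ ψ : K →ₗ[F] K)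
    (h : ∀ a b, φ a * b - a * ψ b ∈ N) :
    ∃ μ : K, (∀ a, φ a = μ * a) ∧ ∀ b, ψ b = μ * b := by
  obtain ⟨f, hB⟩ := exists_dual_mul_nondegenerate (F := F) (K := K)
  set T := LinearMap.BilinForm.orthogonal ((LinearMap.mul F K).compr₂ f) N
  have hT : 2 ≤ finrank F T := by
    have := N.finrank_quotient_add_finrank
    rw [LinearMap.BilinForm.finrank_orthogonal hB]
    omega
  have hTmul : ∀ t ∈ T, ∀ a b, f (t * φ a * b) = f (t * a * ψ b) := fun t ht a b => by
    have : f ((φ a * b - a * ψ b) * t) = 0 :=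
      LinearMap.BilinForm.mem_orthogonal_iff.mp ht _ (h a b)
    rw [sub_mul, map_sub, sub_eq_zero] at this
    simpa only [mul_comm, mul_left_comm, mul_assoc] using this
  obtain ⟨t₂, ht₂T, ht₂⟩ := T.exists_mem_ne_zero_of_ne_bot fun hT0 => by
    rw [hT0, finrank_bot] at hT
    omega
  obtain ⟨t₁, ht₁T, ht₁⟩ : ∃ t ∈ T, t ∉ F ∙ t₂ := SetLike.not_le_iff_exists.mp fun hle => by
    have := Submodule.finrank_mono hle
    rw [finrank_span_singleton ht₂] at this
    omega
  obtain ⟨s, hst⟩ : ∃ s, t₂ * s = t₁ := ⟨t₂⁻¹ * t₁, mul_inv_cancel_left₀ ht₂ t₁⟩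
  have hs : s ∉ (⊥ : Subalgebra F K) := fun hs => by
    obtain ⟨c, hc⟩ := Algebra.mem_bot.mp hs
    exact ht₁ (Submodule.mem_span_singleton.mpr ⟨c, by rw [Algebra.smul_def, hc, mul_comm, hst]⟩)
  have hφs : ∀ a, φ (s * a) = s * φ a := fun a => by
    have : t₂ * φ (s * a) - t₁ * φ a = 0 := hB.1 _ fun b => by
      show f ((_ - _) * b) = 0
      rw [sub_mul, map_sub, hTmul t₂ ht₂T, hTmul t₁ ht₁T, ← mul_assoc, hst, sub_self]
    rw [← hst, sub_eq_zero, mul_assoc] at this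
    exact mul_left_cancel₀ ht₂ this
  have hφ := φ.apply_eq_apply_one_mul_of_finrank_prime hK hs hφs
  refine ⟨φ 1, hφ, fun b => sub_eq_zero.mp <| hB.1 _ fun y => ?_⟩
  have := hTmul t₂ ht₂T (t₂⁻¹ * y) b
  rw [hφ, mul_inv_cancel_left₀ ht₂] at this
  show f ((_ - _) * y) = 0
  rw [sub_mul, map_sub, mul_comm (ψ b), ← this, sub_eq_zero]
  congr 1
  field_simp

end FieldExtension

theorem exists_eq_mul_of_mul_sub_mul_mem_addSubgroup {p e : ℕ} [Fact p.Prime] {K : Type*}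
    [Field K] [Finite K] [Algebra (ZMod p) K] (hK : Nat.card K = p ^ e) (he : e.Prime)
    (N : AddSubgroup K) (hN : p ^ 2 ≤ N.index) (φ ψ : K →+ K)
    (h : ∀ a b, φ a * b - a * ψ b ∈ N) :
    ∃ μ : K, (∀ a, φ a = μ * a) ∧ ∀ b, ψ b = μ * b := by
  have hp := (Fact.out : p.Prime).one_lt
  have hfinrank : finrank (ZMod p) K = e := by
    rw [Module.natCard_eq_pow_finrank (K := ZMod p), Nat.card_zmod] at hK
    exact Nat.pow_right_injective hp hK
  have hquot : 2 ≤ finrank (ZMod p) (K ⧸ N.toZModSubmodule p) := by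
    have : Nat.card (K ⧸ N.toZModSubmodule p) = N.index := rfl
    rw [Module.natCard_eq_pow_finrank (K := ZMod p), Nat.card_zmod] at this
    rwa [← this, Nat.pow_le_pow_iff_right hp] at hN
  exact exists_eq_mul_of_mul_sub_mul_mem (hfinrank ▸ he) _ hquot (φ.toZModLinearMap p)
    (ψ.toZModLinearMap p) h

namespace Matrix

variable {n R : Type*} [Fintype n] [DecidableEq n]

def toAddMonoidEnd [CommRing R] : Matrix n n R →+* AddMonoid.End (n → R) where
  toFun A := AddMonoidHom.mk' (A *ᵥ ·) A.mulVec_add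
  map_one' := AddMonoidHom.ext one_mulVec
  map_mul' A B := AddMonoidHom.ext fun v => (mulVec_mulVec v A B).symm
  map_zero' := AddMonoidHom.ext zero_mulVec
  map_add' A B := AddMonoidHom.ext (add_mulVec A B)

lemma toAddMonoidEnd_injective [CommRing R] :
    Function.Injective (toAddMonoidEnd (n := n) (R := R)) :=
  fun _ _ h => toLin'.injective (LinearMap.ext fun v => DFunLike.congr_fun h v)

def adjugateFinTwoRingHom [CommRing R] :
    Matrix (Fin 2) (Fin 2) R →+* (Matrix (Fin 2) (Fin 2) R)ᵐᵒᵖ where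
  toFun A := MulOpposite.op A.adjugate
  map_one' := by simp
  map_mul' A B := by simp [adjugate_mul_distrib]
  map_zero' := by simp
  map_add' _ _ := by
    rw [← MulOpposite.op_add, adjugate_fin_two, adjugate_fin_two, adjugate_fin_two]
    congr 1
    ext i j
    fin_cases i <;> fin_cases j <;> simp [add_comm]

end Matrix

def symplecticForm {R : Type*} [CommRing R] (x y : Fin 2 → R) : R := x 0 * y 1 - y 0 * x 1

lemma symplecticForm_mulVec {R : Type*} [CommRing R] (A : Matrix (Fin 2) (Fin 2) R)
    (x y : Fin 2 → R) :
    symplecticForm (A *ᵥ x) y = symplecticForm x (A.adjugate *ᵥ y) := by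
  simp [symplecticForm, Matrix.mulVec, dotProduct, Fin.sum_univ_two, Matrix.adjugate_fin_two]
  ring

def AddEquiv.addMonoidEndCongr {V U : Type*} [AddCommGroup V] [AddCommGroup U] (e : V ≃+ U) :
    AddMonoid.End V ≃+* AddMonoid.End U :=
  ((addMonoidEndRingEquivInt V).trans e.toIntLinearEquiv.conjRingEquiv).trans
    (addMonoidEndRingEquivInt U).symm

@[simp] lemma AddEquiv.addMonoidEndCongr_symm_apply {V U : Type*} [AddCommGroup V]
    [AddCommGroup U] (e : V ≃+ U) (f : AddMonoid.End U) (v : V) :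
    e.addMonoidEndCongr.symm f v = e.symm (f (e v)) :=
  rfl

namespace AdjRing

variable {V U W : Type} [AddCommGroup V] [AddCommGroup U] [AddCommGroup W]

lemma map_addMonoidEndCongr (e : V ≃+ U) (c : U →+ U →+ W) :
    (AdjRing ((c.comp e.toAddMonoidHom).compl₂ e.toAddMonoidHom)).map
      (e.addMonoidEndCongr.prodCongr (RingEquiv.op e.addMonoidEndCongr)).toRingHom = AdjRing c := by
  ext ⟨F, G⟩
  rw [RingEquiv.toRingHom_eq_coe, Subring.mem_map_equiv]
  show (∀ v w : V, _) ↔ ∀ u u' : U, _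
  simp [e.surjective.forall]

def congr (e : V ≃+ U) (c : U →+ U →+ W) :
    AdjRing ((c.comp e.toAddMonoidHom).compl₂ e.toAddMonoidHom) ≃+* AdjRing c :=
  (RingEquiv.subringMap _).trans (RingEquiv.subringCongr (map_addMonoidEndCongr e c))

end AdjRing

section Symplectic

variable {K W : Type} [Field K] [AddCommGroup W] (π : K →+ W)
  (c : (Fin 2 → K) →+ (Fin 2 → K) →+ W) (hc : ∀ x y, c x y = π (symplecticForm x y))

def symplecticAdjHom : Matrix (Fin 2) (Fin 2) K →+* AdjRing c :=
  (Matrix.toAddMonoidEnd.prod (Matrix.toAddMonoidEnd.op.comp adjugateFinTwoRingHom)).codRestrict _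
    fun A u v => by
      show c (A *ᵥ u) v = c u (A.adjugate *ᵥ v)
      rw [hc, hc, symplecticForm_mulVec]

lemma symplecticAdjHom_injective : Function.Injective (symplecticAdjHom π c hc) :=
  fun _ _ h => toAddMonoidEnd_injective (congrArg (fun F => F.1.1) h)

theorem symplecticAdjHom_surjective {p e : ℕ} [Fact p.Prime] [Finite K] [Algebra (ZMod p) K]
    (hK : Nat.card K = p ^ e) (he : e.Prime) (hπ : p ^ 2 ≤ π.ker.index) :
    Function.Surjective (symplecticAdjHom π c hc) := by
  rintro ⟨⟨F, G⟩, hFG⟩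
  have key : ∀ u v, symplecticForm (F u) v - symplecticForm u (G.unop v) ∈ π.ker := fun u v => by
    rw [AddMonoidHom.mem_ker, map_sub, ← hc, ← hc, sub_eq_zero]
    exact hFG u v
  let entry (T : AddMonoid.End (Fin 2 → K)) (i j : Fin 2) : K →+ K :=
    AddMonoidHom.mk' (fun a => T (Pi.single j a) i) fun a b => by simp [Pi.single_add]
  have scalar := exists_eq_mul_of_mul_sub_mul_mem_addSubgroup hK he π.ker hπ
  obtain ⟨μ₀₀, hF₀₀, hG₁₁⟩ := scalar (entry F 0 0) (entry G.unop 1 1) fun a b => by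
    simpa [symplecticForm, entry] using key (Pi.single 0 a) (Pi.single 1 b)
  obtain ⟨μ₁₀, hF₁₀, hG₁₀⟩ := scalar (entry F 1 0) (-entry G.unop 1 0) fun a b => by
    rw [← neg_mem_iff]
    convert key (Pi.single 0 a) (Pi.single 0 b) using 1
    simp [symplecticForm, entry]
    ring
  obtain ⟨μ₀₁, hF₀₁, hG₀₁⟩ := scalar (entry F 0 1) (-entry G.unop 0 1) fun a b => by
    convert key (Pi.single 1 a) (Pi.single 1 b) using 1
    simp [symplecticForm, entry]
    ring
  obtain ⟨μ₁₁, hF₁₁, hG₀₀⟩ := scalar (entry F 1 1) (entry G.unop 0 0) fun a b => by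
    rw [← neg_mem_iff]
    convert key (Pi.single 1 a) (Pi.single 0 b) using 1
    simp [symplecticForm, entry]
    ring
  set A : Matrix (Fin 2) (Fin 2) K := !![μ₀₀, μ₀₁; μ₁₀, μ₁₁]
  have hF : ∀ i j a, F (Pi.single j a) i = (A *ᵥ Pi.single j a) i := by
    intro i j a
    fin_cases i <;> fin_cases j
    exacts [(hF₀₀ a).trans (by simp [A]), (hF₀₁ a).trans (by simp [A]),
      (hF₁₀ a).trans (by simp [A]), (hF₁₁ a).trans (by simp [A])]
  have hG : ∀ i j b, G.unop (Pi.single j b) i = (A.adjugate *ᵥ Pi.single j b) i := by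
    intro i j b
    fin_cases i <;> fin_cases j
    exacts [(hG₀₀ b).trans (by simp [A, adjugate_fin_two]),
      (neg_eq_iff_eq_neg.mp (hG₀₁ b)).trans (by simp [A, adjugate_fin_two]),
      (neg_eq_iff_eq_neg.mp (hG₁₀ b)).trans (by simp [A, adjugate_fin_two]),
      (hG₁₁ b).trans (by simp [A, adjugate_fin_two])]
  refine ⟨A, Subtype.ext (Prod.ext ?_ (MulOpposite.unop_injective ?_))⟩
  · exact AddMonoidHom.functions_ext _ _ _ fun j a => funext fun i => (hF i j a).symm
  · exact AddMonoidHom.functions_ext _ _ _ fun j b => funext fun i => (hG i j b).symm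

end Symplectic

namespace Heisenberg

variable {K : Type} [Field K]

lemma inv_mul_inv_mul_mul (x y : Heisenberg K) :
    x⁻¹ * y⁻¹ * x * y = ((0 : K), (0 : K), x.1 * y.2.1 - y.1 * x.2.1) := by
  simp only [↓mul_def, inv_def]
  refine Prod.ext ?_ (Prod.ext ?_ ?_) <;> dsimp <;> ring

lemma commutator_eq_zSubgroup : commutator (Heisenberg K) = zSubgroup K := by
  refine le_antisymm commutator_le_zSubgroup fun x ⟨h₁, h₂⟩ => ?_
  convert comm_mem_commutator (K := K) (1, 0, 0) (0, x.2.2, 0)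
  rw [inv_mul_inv_mul_mul (K := K) (1, 0, 0) (0, x.2.2, 0)]
  exact Prod.ext h₁ (Prod.ext h₂ (by simp))

def centerEquiv : Multiplicative K ≃* commutator (Heisenberg K) where
  toFun γ := ⟨((0 : K), (0 : K), γ.toAdd), commutator_eq_zSubgroup.ge ⟨rfl, rfl⟩⟩
  invFun x := Multiplicative.ofAdd (x : Heisenberg K).2.2
  left_inv _ := rfl
  right_inv := fun ⟨x, hx⟩ => by
    obtain ⟨h₁, h₂⟩ := commutator_le_zSubgroup hx
    exact Subtype.ext (Prod.ext h₁.symm (Prod.ext h₂.symm rfl))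
  map_mul' γ δ := Subtype.ext <| Prod.ext (add_zero 0).symm <| Prod.ext (add_zero 0).symm <|
    (add_zero _).symm.trans (congrArg _ (mul_zero 0).symm)

def proj : Heisenberg K →* Multiplicative (Fin 2 → K) where
  toFun x := Multiplicative.ofAdd ![x.1, x.2.1]
  map_one' := by
    ext i; fin_cases i <;> rfl
  map_mul' x y := by
    ext i; fin_cases i <;> rfl

lemma ker_proj : (proj (K := K)).ker = commutator (Heisenberg K) := by
  rw [commutator_eq_zSubgroup]
  ext x
  simp [proj, zSubgroup, MonoidHom.mem_ker, ← ofAdd_zero, funext_iff, Fin.forall_fin_two]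

lemma proj_surjective : Function.Surjective (proj (K := K)) := fun v =>
  ⟨(v.toAdd 0, v.toAdd 1, 0), by ext i; fin_cases i <;> rfl⟩

noncomputable def abelianizationEquiv :
    Abelianization (Heisenberg K) ≃* Multiplicative (Fin 2 → K) :=
  (QuotientGroup.quotientMulEquivOfEq ker_proj.symm).trans
    (QuotientGroup.quotientKerEquivOfSurjective _ proj_surjective)

noncomputable def abelianizationAddEquiv :
    (Fin 2 → K) ≃+ Additive (Abelianization (Heisenberg K)) :=
  (MulEquiv.toAdditiveLeft abelianizationEquiv).symm

lemma abelianizationAddEquiv_apply (v : Fin 2 → K) :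
    abelianizationAddEquiv v =
      Additive.ofMul (Abelianization.of (G := Heisenberg K) (v 0, v 1, 0)) :=
  abelianizationAddEquiv.eq_symm_apply.mp (funext fun i => by fin_cases i <;> rfl)

def centralCoord (N : Subgroup (Heisenberg K)) :
    K →+ Additive (commutator (Heisenberg K) ⧸ N.subgroupOf (commutator (Heisenberg K))) :=
  MonoidHom.toAdditiveRight ((QuotientGroup.mk' _).comp centerEquiv.toMonoidHom)

lemma centralCoord_surjective (N : Subgroup (Heisenberg K)) :
    Function.Surjective (centralCoord N) :=
  (QuotientGroup.mk'_surjective _).comp centerEquiv.surjective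

lemma index_ker_centralCoord (N : Subgroup (Heisenberg K)) :
    (centralCoord N).ker.index = N.relIndex (commutator (Heisenberg K)) := by
  rw [AddSubgroup.index_ker, AddMonoidHom.range_eq_top.mpr (centralCoord_surjective N),
    AddSubgroup.card_top]
  exact Nat.card_congr Additive.toMul

lemma commutatorPairing_eq_symplecticForm (N : Subgroup (Heisenberg K))
    (c : Additive (Abelianization (Heisenberg K)) →+
      Additive (Abelianization (Heisenberg K)) →+
      Additive (↥(commutator (Heisenberg K)) ⧸ N.subgroupOf (commutator (Heisenberg K))))
    (hc : ∀ x y : Heisenberg K,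
      c (Additive.ofMul (Abelianization.of x)) (Additive.ofMul (Abelianization.of y)) =
        Additive.ofMul (QuotientGroup.mk
          (⟨x⁻¹ * y⁻¹ * x * y, comm_mem_commutator x y⟩ : ↥(commutator (Heisenberg K)))))
    (u v : Fin 2 → K) :
    c (abelianizationAddEquiv u) (abelianizationAddEquiv v) =
      centralCoord N (symplecticForm u v) := by
  rw [abelianizationAddEquiv_apply, abelianizationAddEquiv_apply, hc (u 0, u 1, 0) (v 0, v 1, 0)]
  exact congrArg (Additive.ofMul ∘ QuotientGroup.mk) (Subtype.ext (inv_mul_inv_mul_mul _ _))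

end Heisenberg

open Heisenberg in
theorem heisenberg_adjoint_ring_iso_matrix_general
    (p e : ℕ) (hp : p.Prime) (he : e.Prime)
    (K : Type) [Field K] [Fintype K] (hK : Fintype.card K = p ^ e)
    (N : Subgroup (Heisenberg K))
    (g : ℕ) (hg : 2 ≤ g)
    (hrel : N.relIndex (commutator (Heisenberg K)) = p ^ g)
    (c : Additive (Abelianization (Heisenberg K)) →+
      Additive (Abelianization (Heisenberg K)) →+
      Additive (↥(commutator (Heisenberg K)) ⧸
        N.subgroupOf (commutator (Heisenberg K))))
    (hc : ∀ x y : Heisenberg K,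
      c (Additive.ofMul (Abelianization.of x)) (Additive.ofMul (Abelianization.of y)) =
        Additive.ofMul (QuotientGroup.mk
          (⟨x⁻¹ * y⁻¹ * x * y, comm_mem_commutator x y⟩ :
            ↥(commutator (Heisenberg K))))) :
    Nonempty (↥(AdjRing c) ≃+* Matrix (Fin 2) (Fin 2) K) := by
  have := Fact.mk hp
  have := charP_of_card_eq_prime_pow hK
  let := ZMod.algebra K p
  have hπ : p ^ 2 ≤ (centralCoord N).ker.index := by
    rw [index_ker_centralCoord, hrel]
    exact Nat.pow_le_pow_right hp.pos hg
  have hc' := commutatorPairing_eq_symplecticForm N c hc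
  exact ⟨(AdjRing.congr abelianizationAddEquiv c).symm.trans (RingEquiv.ofBijective _
    ⟨symplecticAdjHom_injective _ _ hc',
      symplecticAdjHom_surjective _ _ hc' (Nat.card_eq_fintype_card.trans hK) he hπ⟩).symm⟩

open Heisenberg in
/-- Let `N ≤ H'` be a subgroup of the commutator subgroup of the
Heisenberg group `H = H(F_q)`, `q = p^e`, with `|H' : N| = p^g`, `g ≥ 2`.  The
commutator of `H/N` induces a biadditive (`Z_p`-bilinear) map
`c : H/H' × H/H' → H'/N`, and its adjoint ring is isomorphic to `M₂(F_q)`. -/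
theorem heisenberg_adjoint_ring_iso_matrix
    (p e : ℕ) (hp : p.Prime) (he : e.Prime) (hp2 : 2 < p) (he2 : 2 < e)
    (K : Type) [Field K] [Fintype K] (hK : Fintype.card K = p ^ e)
    (N : Subgroup (Heisenberg K)) (hN : N ≤ commutator (Heisenberg K))
    (g : ℕ) (hg : 2 ≤ g)
    (hrel : N.relIndex (commutator (Heisenberg K)) = p ^ g)
    (c : Additive (Abelianization (Heisenberg K)) →+
      Additive (Abelianization (Heisenberg K)) →+
      Additive (↥(commutator (Heisenberg K)) ⧸
        N.subgroupOf (commutator (Heisenberg K))))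
    (hc : ∀ x y : Heisenberg K,
      c (Additive.ofMul (Abelianization.of x)) (Additive.ofMul (Abelianization.of y)) =
        Additive.ofMul (QuotientGroup.mk
          (⟨x⁻¹ * y⁻¹ * x * y, comm_mem_commutator x y⟩ :
            ↥(commutator (Heisenberg K))))) :
    Nonempty (↥(AdjRing c) ≃+* Matrix (Fin 2) (Fin 2) K) :=
  heisenberg_adjoint_ring_iso_matrix_general p e hp he K hK N g hg hrel c hc
end
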